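/- Let U be the γ-unitization of a GPEA P and let ∼ be a congruence on P. Define ∼* on U by: for a, b ∈ P, a ∼* b iff a ∼ b, ηa ∼* ηb iff a ∼ b, and no element of P is ∼*-related to any element of U \ P. Then ∼* is a congruence on U iff ∼ is a γ-congruence (a ∼ b ⇔ γa ∼ γb) satisfying (C4) and (C5'). -/

import Mathlib

open scoped Classical

/-- A generalized pseudo effect algebra: partial orthosummation modeled via `Option`. -/
structure GPEA (P : Type*) where
  oplus : P → P → Option P
  zero : P
  assoc₁ : ∀ {a b c ab s : P}, oplus a b = some ab → oplus ab c = some s →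
    ∃ bc, oplus b c = some bc ∧ oplus a bc = some s
  assoc₂ : ∀ {a b c bc s : P}, oplus b c = some bc → oplus a bc = some s →
    ∃ ab, oplus a b = some ab ∧ oplus ab c = some s
  conj : ∀ {a b s : P}, oplus a b = some s →
    (∃ c, oplus c a = some s) ∧ (∃ d, oplus b d = some s)
  cancel_right : ∀ {a b c s : P}, oplus a c = some s → oplus b c = some s → a = b
  cancel_left : ∀ {a b c s : P}, oplus c a = some s → oplus c b = some s → a = b
  oplus_zero : ∀ a : P, oplus a zero = some a
  zero_oplus : ∀ a : P, oplus zero a = some a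
  pos : ∀ {a b : P}, oplus a b = some zero → a = zero ∧ b = zero

namespace GPEA

variable {P Q : Type*}

/-- `a ≤ b` iff there is `c` with `a ⊕ c = b`. -/
def le (G : GPEA P) (a b : P) : Prop := ∃ c, G.oplus a c = some b

/-- `a ≤ b` (left version) iff there is `d` with `d ⊕ a = b`. -/
def leL (G : GPEA P) (a b : P) : Prop := ∃ d, G.oplus d a = some b

/-- An ideal: a nonempty, downward closed subset closed under existing orthosums. -/
def IsIdeal (G : GPEA P) (I : Set P) : Prop :=
  I.Nonempty ∧ (∀ a ∈ I, ∀ b : P, G.le b a → b ∈ I) ∧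
    (∀ a ∈ I, ∀ b ∈ I, ∀ s : P, G.oplus a b = some s → s ∈ I)

/-- A normal ideal: `a ⊕ c = c ⊕ b` implies `a ∈ I ↔ b ∈ I`. -/
def IsNormalIdeal (G : GPEA P) (I : Set P) : Prop :=
  G.IsIdeal I ∧ ∀ a b c s : P, G.oplus a c = some s → G.oplus c b = some s → (a ∈ I ↔ b ∈ I)

/-- Condition (R1) for an ideal. -/
def R1 (G : GPEA P) (I : Set P) : Prop :=
  ∀ i ∈ I, ∀ a b s : P, G.oplus a b = some s → G.le i s →
    ∃ j ∈ I, ∃ k ∈ I, G.le j a ∧ G.le k b ∧ ∃ t, G.oplus j k = some t ∧ G.le i t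

/-- Condition (R2) for an ideal. -/
def R2 (G : GPEA P) (I : Set P) : Prop :=
  ∀ i ∈ I, ∀ a : P, G.le i a →
    (∀ b x s : P, G.oplus x i = some a → G.oplus x b = some s →
      ∃ j ∈ I, G.le j b ∧ ∀ c, G.oplus j c = some b → ∃ t, G.oplus a c = some t) ∧
    (∀ b y s : P, G.oplus i y = some a → G.oplus b y = some s →
      ∃ k ∈ I, G.le k b ∧ ∀ z, G.oplus z k = some b → ∃ t, G.oplus z a = some t)

/-- A Riesz ideal is an ideal satisfying (R1) and (R2). -/
def IsRieszIdeal (G : GPEA P) (I : Set P) : Prop := G.IsIdeal I ∧ G.R1 I ∧ G.R2 I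

/-- A normal Riesz ideal. -/
def IsNormalRieszIdeal (G : GPEA P) (I : Set P) : Prop := G.IsNormalIdeal I ∧ G.R1 I ∧ G.R2 I

/-- A GPEA-morphism. -/
def IsMorphism (G : GPEA P) (H : GPEA Q) (φ : P → Q) : Prop :=
  ∀ a b s : P, G.oplus a b = some s → H.oplus (φ a) (φ b) = some (φ s)

/-- A unitizing GPEA-automorphism: a GPEA-automorphism `γ` such that
`γa ⊕ b` is defined iff `b ⊕ a` is defined. -/
def IsUnitizing (G : GPEA P) (γ : P → P) : Prop :=
  Function.Bijective γ ∧ G.IsMorphism G γ ∧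
    (∀ a b : P, (∃ s, G.oplus (γ a) (γ b) = some s) → ∃ t, G.oplus a b = some t) ∧
    (∀ a b : P, (∃ s, G.oplus (γ a) b = some s) ↔ ∃ t, G.oplus b a = some t)

/-- A weak congruence. -/
def IsWeakCong (G : GPEA P) (r : P → P → Prop) : Prop :=
  Equivalence r ∧ ∀ a b a₁ b₁ s s₁ : P, G.oplus a b = some s → G.oplus a₁ b₁ = some s₁ →
    r a a₁ → r b b₁ → r s s₁

/-- Condition (C3): a weak congruence satisfying it is a congruence. -/
def C3 (G : GPEA P) (r : P → P → Prop) : Prop :=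
  ∀ a b s : P, G.oplus a b = some s →
    (∀ a₁, r a a₁ → ∃ b₁, r b b₁ ∧ ∃ t, G.oplus a₁ b₁ = some t) ∧
    (∀ b₂, r b b₂ → ∃ a₂, r a a₂ ∧ ∃ t, G.oplus a₂ b₂ = some t)

/-- Condition (C4). -/
def C4 (G : GPEA P) (r : P → P → Prop) : Prop :=
  ∀ a b a₁ b₁ s t : P, r a b →
    ((G.oplus a a₁ = some s ∧ G.oplus b b₁ = some t ∧ r s t) ∨
      (G.oplus a₁ a = some s ∧ G.oplus b₁ b = some t ∧ r s t)) → r a₁ b₁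

/-- Condition (C5'). -/
def C5' (G : GPEA P) (r : P → P → Prop) : Prop :=
  ∀ a b c s : P, G.oplus b c = some s → r a s →
    ∃ a₁ a₂, r a₁ b ∧ r a₂ c ∧ G.oplus a₁ a₂ = some a

/-- Condition (CR): here `a \ c` is the unique `x` with `x ⊕ c = a`. -/
def CR (G : GPEA P) (r : P → P → Prop) : Prop :=
  ∀ a b : P, r a b → ∃ c d : P,
    G.le c a ∧ G.le a d ∧ G.le c b ∧ G.le b d ∧
    (∀ x, G.oplus x c = some a → r x G.zero) ∧
    (∀ x, G.oplus x c = some b → r x G.zero) ∧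
    (∀ x, G.oplus x a = some d → r x G.zero) ∧
    (∀ x, G.oplus x b = some d → r x G.zero)

/-- A Riesz congruence: a congruence satisfying (C4), (C5') and (CR). -/
def IsRieszCong (G : GPEA P) (r : P → P → Prop) : Prop :=
  G.IsWeakCong r ∧ G.C3 r ∧ G.C4 r ∧ G.C5' r ∧ G.CR r

/-- The relation `∼_I` induced by an ideal `I`: `a ∼_I b` iff there are
`i, j ∈ I` with `i ≤ a`, `j ≤ b` and `a \ i = b \ j`. -/
def simI (G : GPEA P) (I : Set P) (a b : P) : Prop :=
  ∃ i ∈ I, ∃ j ∈ I, ∃ d : P, G.oplus d i = some a ∧ G.oplus d j = some b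

/-- Condition (GCR) for the relation `∼_I`. -/
def GCR (G : GPEA P) (I : Set P) : Prop :=
  ∀ a b : P, G.simI I a b → ∃ i ∈ I, ∃ j ∈ I, ∃ s, G.oplus i a = some s ∧ G.oplus j b = some s

/-- The Riesz decomposition property. -/
def RDP (G : GPEA P) : Prop :=
  ∀ a b c d s : P, G.oplus a b = some s → G.oplus c d = some s →
    ∃ e₁₁ e₁₂ e₂₁ e₂₂ : P, G.oplus e₁₁ e₁₂ = some a ∧ G.oplus e₂₁ e₂₂ = some b ∧
      G.oplus e₁₁ e₂₁ = some c ∧ G.oplus e₁₂ e₂₂ = some d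

end GPEA

/-- A pseudo effect algebra: a GPEA with a largest element `1`. -/
structure PEA (P : Type*) extends GPEA P where
  one : P
  le_one : ∀ a : P, ∃ c, oplus a c = some one
  le_one' : ∀ a : P, ∃ d, oplus d a = some one

namespace PEA

variable {P : Type*}

/-- The right supplement `a˜`: the unique element with `a ⊕ a˜ = 1`. -/
noncomputable def rsup (U : PEA P) (a : P) : P := Classical.choose (U.le_one a)

/-- The left supplement `a⁻`: the unique element with `a⁻ ⊕ a = 1`. -/
noncomputable def lsup (U : PEA P) (a : P) : P := Classical.choose (U.le_one' a)

/-- A state on a PEA. -/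
def IsState (U : PEA P) (s : P → ℝ) : Prop :=
  (∀ a : P, 0 ≤ s a ∧ s a ≤ 1) ∧ s U.one = 1 ∧
    ∀ a b c : P, U.oplus a b = some c → s c = s a + s b

end PEA

/-- `U` is a binary unitization of the GPEA `G` via the embedding `ι`. -/
def IsBinaryUnitization {P Q : Type*} (G : GPEA P) (U : PEA Q) (ι : P → Q) : Prop :=
  Function.Injective ι ∧ ι G.zero = U.toGPEA.zero ∧
    (∀ a b : P, U.oplus (ι a) (ι b) = (G.oplus a b).map ι) ∧
    (∀ a : P, U.one ≠ ι a) ∧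
    (∀ x y : Q, x ∉ Set.range ι → y ∉ Set.range ι → U.oplus x y = none)

/-- The orthosummation of the `γ`-unitization on `P ⊕ P`
(`Sum.inl a` is `a ∈ P`, `Sum.inr b` is `ηb`). -/
noncomputable def uop {P : Type*} (G : GPEA P) (γ : P → P) :
    P ⊕ P → P ⊕ P → Option (P ⊕ P)
  | .inl a, .inl b => (G.oplus a b).map .inl
  | .inl a, .inr b => if h : G.leL a b then some (.inr (Classical.choose h)) else none
  | .inr a, .inl b => if h : G.le (γ b) a then some (.inr (Classical.choose h)) else none
  | .inr _, .inr _ => none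

/-- A PEA-isomorphism. -/
def IsPEAIso {A B : Type*} (U : PEA A) (V : PEA B) (φ : A → B) : Prop :=
  Function.Bijective φ ∧
    (∀ a b s : A, U.oplus a b = some s → V.oplus (φ a) (φ b) = some (φ s)) ∧
    (∀ a b : A, (∃ s, V.oplus (φ a) (φ b) = some s) → ∃ t, U.oplus a b = some t) ∧
    φ U.one = V.one

/-- The coordinatewise orthosummation on `I → P`. -/
noncomputable def piOplus {P : Type*} {I : Type*} (G : GPEA P) (f g : I → P) :
    Option (I → P) :=
  if h : ∀ i, ∃ s, G.oplus (f i) (g i) = some s then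
    some (fun i => Classical.choose (h i)) else none

/-- The extension `∼*` of a relation on `P` to `P ⊕ P`. -/
def rstar {P : Type*} (r : P → P → Prop) : P ⊕ P → P ⊕ P → Prop
  | .inl a, .inl b => r a b
  | .inr a, .inr b => r a b
  | _, _ => False

/-!
In the unitization, `ηa ⊕ b = ηc` means `γb ⊕ c = a` and `a ⊕ ηb = ηd` means `d ⊕ a = b`,
while `ηa ⊕ ηb` is never defined. Read through these two rules, additivity of `∼*` on mixed
sums is exactly (C4) in its two forms (the first after moving `b ∼ b₁` across `γ`), and (C3)
for `∼*` on mixed sums comes from (C3) for `∼` together with (C5') and `γ`-invariance.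
Conversely, applying (C3) and additivity of `∼*` to the sums `η(γa) ⊕ a = η0` yields
`a ∼ b ⇔ γa ∼ γb`, after which the same translation gives (C4) and (C5').
-/

lemma dite_exists_choose_eq_some_iff {α β : Type*} {p : α → Prop} {f : α → β}
    (hp : ∀ x y, p x → p y → x = y) {y : β} :
    (if h : ∃ x, p x then some (f (Classical.choose h)) else none) = some y ↔
      ∃ x, y = f x ∧ p x := by
  constructor
  · intro h
    by_cases hex : ∃ x, p x
    · rw [dif_pos hex, Option.some_inj] at h
      exact ⟨_, h.symm, Classical.choose_spec hex⟩
    · rw [dif_neg hex] at h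
      cases h
  · rintro ⟨x, rfl, hx⟩
    rw [dif_pos ⟨x, hx⟩, hp _ _ (Classical.choose_spec (⟨x, hx⟩ : ∃ x, p x)) hx]

namespace GPEA.IsUnitizing

variable {P : Type*} {G : GPEA P} {γ : P → P}

lemma map_zero (hγ : G.IsUnitizing γ) : γ G.zero = G.zero :=
  G.cancel_left (hγ.2.1 _ _ _ (G.oplus_zero G.zero)) (G.oplus_zero (γ G.zero))

lemma oplus_eq_some_of_map {a b s : P} (hγ : G.IsUnitizing γ)
    (h : G.oplus (γ a) (γ b) = some (γ s)) : G.oplus a b = some s := by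
  obtain ⟨t, ht⟩ := hγ.2.2.1 a b ⟨_, h⟩
  rwa [hγ.1.1 (Option.some.inj ((hγ.2.1 a b t ht).symm.trans h))] at ht

end GPEA.IsUnitizing

def GPEA.C3At {P : Type*} (G : GPEA P) (r : P → P → Prop) (a b : P) : Prop :=
  (∀ a₁, r a a₁ → ∃ b₁, r b b₁ ∧ ∃ t, G.oplus a₁ b₁ = some t) ∧
    (∀ b₂, r b b₂ → ∃ a₂, r a a₂ ∧ ∃ t, G.oplus a₂ b₂ = some t)

section Unitization

variable {P : Type*} {G : GPEA P} {γ : P → P} {U : GPEA (P ⊕ P)} {r : P → P → Prop}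

lemma rstar_iff {A B : P ⊕ P} :
    rstar r A B ↔ (∃ a b, A = .inl a ∧ B = .inl b ∧ r a b) ∨
      (∃ a b, A = .inr a ∧ B = .inr b ∧ r a b) := by
  rcases A with a | a <;> rcases B with b | b <;> simp [rstar]

lemma rstar_equivalence (hr : Equivalence r) : Equivalence (rstar r) where
  refl := by rintro (a | a) <;> exact hr.refl a
  symm := by rintro (a | a) (b | b) h <;> first | exact h.elim | exact hr.symm h
  trans := by
    rintro (a | a) (b | b) (c | c) h h' <;>
      first | exact h.elim | exact h'.elim | exact hr.trans h h'

lemma uop_inl_inl_eq_some {a b : P} {S : P ⊕ P} :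
    uop G γ (.inl a) (.inl b) = some S ↔ ∃ s, S = .inl s ∧ G.oplus a b = some s := by
  simp only [uop, Option.map_eq_some_iff]
  exact ⟨fun ⟨s, hs, h⟩ => ⟨s, h.symm, hs⟩, fun ⟨s, h, hs⟩ => ⟨s, hs, h.symm⟩⟩

lemma uop_inl_inr_eq_some {a b : P} {S : P ⊕ P} :
    uop G γ (.inl a) (.inr b) = some S ↔ ∃ d, S = .inr d ∧ G.oplus d a = some b :=
  dite_exists_choose_eq_some_iff fun _ _ => G.cancel_right

lemma uop_inr_inl_eq_some {a b : P} {S : P ⊕ P} :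
    uop G γ (.inr a) (.inl b) = some S ↔ ∃ c, S = .inr c ∧ G.oplus (γ b) c = some a :=
  dite_exists_choose_eq_some_iff fun _ _ => G.cancel_left


lemma isWeakCong_rstar (hop : U.oplus = uop G γ) (hw : G.IsWeakCong r)
    (hγr : ∀ a b, r a b → r (γ a) (γ b)) (h4 : G.C4 r) : U.IsWeakCong (rstar r) := by
  refine ⟨rstar_equivalence hw.1, ?_⟩
  rw [hop]
  intro A B A₁ B₁ S S₁ hS hS₁ hA hB
  rcases rstar_iff.1 hA with ⟨a, a₁, rfl, rfl, ha⟩ | ⟨a, a₁, rfl, rfl, ha⟩ <;>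
    rcases rstar_iff.1 hB with ⟨b, b₁, rfl, rfl, hb⟩ | ⟨b, b₁, rfl, rfl, hb⟩
  · obtain ⟨s, rfl, hs⟩ := uop_inl_inl_eq_some.1 hS
    obtain ⟨s₁, rfl, hs₁⟩ := uop_inl_inl_eq_some.1 hS₁
    exact hw.2 _ _ _ _ _ _ hs hs₁ ha hb
  · obtain ⟨d, rfl, hd⟩ := uop_inl_inr_eq_some.1 hS
    obtain ⟨d₁, rfl, hd₁⟩ := uop_inl_inr_eq_some.1 hS₁
    exact h4 a a₁ d d₁ b b₁ ha (.inr ⟨hd, hd₁, hb⟩)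
  · obtain ⟨c, rfl, hc⟩ := uop_inr_inl_eq_some.1 hS
    obtain ⟨c₁, rfl, hc₁⟩ := uop_inr_inl_eq_some.1 hS₁
    exact h4 (γ b) (γ b₁) c c₁ a a₁ (hγr b b₁ hb) (.inl ⟨hc, hc₁, ha⟩)
  · cases hS

lemma c3At_rstar_inl_inl (hop : U.oplus = uop G γ) (h3 : G.C3 r) {a b s : P}
    (hs : G.oplus a b = some s) : U.C3At (rstar r) (.inl a) (.inl b) := by
  rw [GPEA.C3At, hop]
  constructor
  · rintro (a₁ | a₁) ha₁
    · obtain ⟨b₁, hb₁, t, ht⟩ := (h3 a b s hs).1 a₁ ha₁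
      exact ⟨.inl b₁, hb₁, _, uop_inl_inl_eq_some.2 ⟨t, rfl, ht⟩⟩
    · exact ha₁.elim
  · rintro (b₂ | b₂) hb₂
    · obtain ⟨a₂, ha₂, t, ht⟩ := (h3 a b s hs).2 b₂ hb₂
      exact ⟨.inl a₂, ha₂, _, uop_inl_inl_eq_some.2 ⟨t, rfl, ht⟩⟩
    · exact hb₂.elim

lemma c3At_rstar_inl_inr (hop : U.oplus = uop G γ) (hw : G.IsWeakCong r) (h3 : G.C3 r)
    (h5 : G.C5' r) {a b d : P} (hd : G.oplus d a = some b) :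
    U.C3At (rstar r) (.inl a) (.inr b) := by
  rw [GPEA.C3At, hop]
  constructor
  · rintro (a₁ | a₁) ha₁
    · obtain ⟨d₁, hd₁, b₁, hb₁⟩ := (h3 d a b hd).2 a₁ ha₁
      exact ⟨.inr b₁, hw.2 _ _ _ _ _ _ hd hb₁ hd₁ ha₁, _, uop_inl_inr_eq_some.2 ⟨d₁, rfl, hb₁⟩⟩
    · exact ha₁.elim
  · rintro (b₂ | b₂) hb₂
    · exact hb₂.elim
    · obtain ⟨x, y, -, hy, hxy⟩ := h5 b₂ d a b hd (hw.1.symm hb₂)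
      exact ⟨.inl y, hw.1.symm hy, _, uop_inl_inr_eq_some.2 ⟨x, rfl, hxy⟩⟩

lemma c3At_rstar_inr_inl (hop : U.oplus = uop G γ) (hw : G.IsWeakCong r) (h3 : G.C3 r)
    (hγr : ∀ a b, r a b ↔ r (γ a) (γ b)) (h5 : G.C5' r) (hsurj : Function.Surjective γ)
    {a b c : P} (hc : G.oplus (γ b) c = some a) : U.C3At (rstar r) (.inr a) (.inl b) := by
  rw [GPEA.C3At, hop]
  constructor
  · rintro (a₁ | a₁) ha₁
    · exact ha₁.elim
    · obtain ⟨x, y, hx, -, hxy⟩ := h5 a₁ (γ b) c a hc (hw.1.symm ha₁)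
      obtain ⟨b₁, rfl⟩ := hsurj x
      exact ⟨.inl b₁, hw.1.symm ((hγr b₁ b).2 hx), _, uop_inr_inl_eq_some.2 ⟨y, rfl, hxy⟩⟩
  · rintro (b₂ | b₂) hb₂
    · obtain ⟨c₂, hc₂, a₂, ha₂⟩ := (h3 (γ b) c a hc).1 (γ b₂) ((hγr b b₂).1 hb₂)
      exact ⟨.inr a₂, hw.2 _ _ _ _ _ _ hc ha₂ ((hγr b b₂).1 hb₂) hc₂, _,
        uop_inr_inl_eq_some.2 ⟨c₂, rfl, ha₂⟩⟩
    · exact hb₂.elim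

lemma c3_rstar (hop : U.oplus = uop G γ) (hw : G.IsWeakCong r) (h3 : G.C3 r)
    (hγr : ∀ a b, r a b ↔ r (γ a) (γ b)) (h5 : G.C5' r) (hsurj : Function.Surjective γ) :
    U.C3 (rstar r) := by
  rintro (a | a) (b | b) S hS <;> rw [hop] at hS
  · obtain ⟨s, -, hs⟩ := uop_inl_inl_eq_some.1 hS
    exact c3At_rstar_inl_inl hop h3 hs
  · obtain ⟨d, -, hd⟩ := uop_inl_inr_eq_some.1 hS
    exact c3At_rstar_inl_inr hop hw h3 h5 hd
  · obtain ⟨c, -, hc⟩ := uop_inr_inl_eq_some.1 hS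
    exact c3At_rstar_inr_inl hop hw h3 hγr h5 hsurj hc
  · cases hS


lemma rel_of_isWeakCong_rstar_inl_inr (hop : U.oplus = uop G γ) (hwU : U.IsWeakCong (rstar r))
    {a b d a₁ b₁ d₁ : P} (hd : G.oplus d a = some b) (hd₁ : G.oplus d₁ a₁ = some b₁)
    (ha : r a a₁) (hb : r b b₁) : r d d₁ :=
  hwU.2 (.inl a) (.inr b) (.inl a₁) (.inr b₁) (.inr d) (.inr d₁)
    (hop ▸ uop_inl_inr_eq_some.2 ⟨d, rfl, hd⟩) (hop ▸ uop_inl_inr_eq_some.2 ⟨d₁, rfl, hd₁⟩) ha hb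

lemma rel_of_isWeakCong_rstar_inr_inl (hop : U.oplus = uop G γ) (hwU : U.IsWeakCong (rstar r))
    {a b c a₁ b₁ c₁ : P} (hc : G.oplus (γ b) c = some a) (hc₁ : G.oplus (γ b₁) c₁ = some a₁)
    (ha : r a a₁) (hb : r b b₁) : r c c₁ :=
  hwU.2 (.inr a) (.inl b) (.inr a₁) (.inl b₁) (.inr c) (.inr c₁)
    (hop ▸ uop_inr_inl_eq_some.2 ⟨c, rfl, hc⟩) (hop ▸ uop_inr_inl_eq_some.2 ⟨c₁, rfl, hc₁⟩) ha hb

lemma exists_oplus_of_c3_rstar_left (hop : U.oplus = uop G γ) (h3U : U.C3 (rstar r))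
    {a b c a₁ : P} (hc : G.oplus (γ b) c = some a) (ha : r a a₁) :
    ∃ b₁ c₁, r b b₁ ∧ G.oplus (γ b₁) c₁ = some a₁ := by
  have hS : U.oplus (.inr a) (.inl b) = some (.inr c) := hop ▸ uop_inr_inl_eq_some.2 ⟨c, rfl, hc⟩
  obtain ⟨_ | b₁, hb₁, T, hT⟩ := (h3U _ _ _ hS).1 (.inr a₁) ha
  · rw [hop] at hT
    obtain ⟨c₁, -, hc₁⟩ := uop_inr_inl_eq_some.1 hT
    exact ⟨_, c₁, hb₁, hc₁⟩
  · exact hb₁.elim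

lemma exists_oplus_of_c3_rstar_right (hop : U.oplus = uop G γ) (h3U : U.C3 (rstar r))
    {a b c b₂ : P} (hc : G.oplus (γ b) c = some a) (hb : r b b₂) :
    ∃ a₂ c₂, r a a₂ ∧ G.oplus (γ b₂) c₂ = some a₂ := by
  have hS : U.oplus (.inr a) (.inl b) = some (.inr c) := hop ▸ uop_inr_inl_eq_some.2 ⟨c, rfl, hc⟩
  obtain ⟨_ | a₂, ha₂, T, hT⟩ := (h3U _ _ _ hS).2 (.inl b₂) hb
  · exact ha₂.elim
  · rw [hop] at hT
    obtain ⟨c₂, -, hc₂⟩ := uop_inr_inl_eq_some.1 hT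
    exact ⟨a₂, c₂, ha₂, hc₂⟩

lemma rel_zero_of_rel_map_zero (hop : U.oplus = uop G γ) (h3U : U.C3 (rstar r))
    (hγ : G.IsUnitizing γ) {f : P} (hf : r (γ f) G.zero) : r f G.zero := by
  obtain ⟨g, c, hfg, hgc⟩ := exists_oplus_of_c3_rstar_left hop h3U (G.oplus_zero (γ f)) hf
  rwa [hγ.1.1 ((G.pos hgc).1.trans hγ.map_zero.symm)] at hfg

lemma rel_map_of_rel (hop : U.oplus = uop G γ) (hwU : U.IsWeakCong (rstar r))
    (h3U : U.C3 (rstar r)) (hw : G.IsWeakCong r) {a b : P} (hab : r a b) : r (γ a) (γ b) := by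
  obtain ⟨c, e, hac, he⟩ := exists_oplus_of_c3_rstar_right hop h3U (G.oplus_zero (γ a)) hab
  have he0 : r e G.zero := rel_of_isWeakCong_rstar_inr_inl hop hwU he (G.oplus_zero (γ a))
    (hw.1.symm hac) (hw.1.symm hab)
  exact hw.1.trans hac (hw.2 _ _ _ _ _ _ he (G.oplus_zero (γ b)) (hw.1.refl _) he0)

lemma rel_of_rel_map (hop : U.oplus = uop G γ) (hwU : U.IsWeakCong (rstar r))
    (h3U : U.C3 (rstar r)) (hw : G.IsWeakCong r) (hγ : G.IsUnitizing γ) {a b : P}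
    (hab : r (γ a) (γ b)) : r a b := by
  obtain ⟨b', e, hbb', he⟩ :=
    exists_oplus_of_c3_rstar_left hop h3U (G.oplus_zero (γ b)) (hw.1.symm hab)
  have he0 : r e G.zero := rel_of_isWeakCong_rstar_inr_inl hop hwU he (G.oplus_zero (γ b)) hab
    (hw.1.symm hbb')
  obtain ⟨f, rfl⟩ := hγ.1.2 e
  have hf : G.oplus b' f = some a := hγ.oplus_eq_some_of_map he
  have hab' : r a b' := hw.2 _ _ _ _ _ _ hf (G.oplus_zero b') (hw.1.refl _)
    (rel_zero_of_rel_map_zero hop h3U hγ he0)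
  exact hw.1.trans hab' (hw.1.symm hbb')

lemma c4_of_rstar (hop : U.oplus = uop G γ) (hwU : U.IsWeakCong (rstar r))
    (h3U : U.C3 (rstar r)) (hw : G.IsWeakCong r) (hγ : G.IsUnitizing γ) : G.C4 r := by
  rintro a b a₁ b₁ s t hab (⟨hs, ht, hst⟩ | ⟨hs, ht, hst⟩)
  · obtain ⟨x, rfl⟩ := hγ.1.2 a
    obtain ⟨y, rfl⟩ := hγ.1.2 b
    exact rel_of_isWeakCong_rstar_inr_inl hop hwU hs ht hst
      (rel_of_rel_map hop hwU h3U hw hγ hab)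
  · exact rel_of_isWeakCong_rstar_inl_inr hop hwU hs ht hab hst

lemma c5'_of_rstar (hop : U.oplus = uop G γ) (hwU : U.IsWeakCong (rstar r))
    (h3U : U.C3 (rstar r)) (hw : G.IsWeakCong r) (hsurj : Function.Surjective γ) :
    G.C5' r := by
  intro a b c s hbc has
  obtain ⟨x, rfl⟩ := hsurj b
  obtain ⟨x', a₂, hxx', ha₂⟩ := exists_oplus_of_c3_rstar_left hop h3U hbc (hw.1.symm has)
  exact ⟨γ x', a₂, hw.1.symm (rel_map_of_rel hop hwU h3U hw hxx'),
    rel_of_isWeakCong_rstar_inr_inl hop hwU ha₂ hbc has (hw.1.symm hxx'), ha₂⟩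

end Unitization

theorem stmt15_general {P : Type*} (G : GPEA P) (γ : P → P) (hγ : G.IsUnitizing γ)
    (U : PEA (P ⊕ P)) (hop : U.toGPEA.oplus = uop G γ)
    (r : P → P → Prop) (hw : G.IsWeakCong r) (h3 : G.C3 r) :
    (U.toGPEA.IsWeakCong (rstar r) ∧ U.toGPEA.C3 (rstar r)) ↔
      ((∀ a b : P, r a b ↔ r (γ a) (γ b)) ∧ G.C4 r ∧ G.C5' r) := by
  constructor
  · rintro ⟨hwU, h3U⟩
    exact ⟨fun a b => ⟨rel_map_of_rel hop hwU h3U hw, rel_of_rel_map hop hwU h3U hw hγ⟩,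
      c4_of_rstar hop hwU h3U hw hγ, c5'_of_rstar hop hwU h3U hw hγ.1.2⟩
  · rintro ⟨hγr, h4, h5⟩
    exact ⟨isWeakCong_rstar hop hw (fun a b => (hγr a b).1) h4,
      c3_rstar hop hw h3 hγr h5 hγ.1.2⟩

theorem stmt15 {P : Type*} (G : GPEA P) (γ : P → P) (hγ : G.IsUnitizing γ)
    (U : PEA (P ⊕ P)) (hop : U.toGPEA.oplus = uop G γ)
    (hz : U.toGPEA.zero = Sum.inl G.zero) (ho : U.one = Sum.inr G.zero)
    (r : P → P → Prop) (hw : G.IsWeakCong r) (h3 : G.C3 r) :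
    (U.toGPEA.IsWeakCong (rstar r) ∧ U.toGPEA.C3 (rstar r)) ↔
      ((∀ a b : P, r a b ↔ r (γ a) (γ b)) ∧ G.C4 r ∧ G.C5' r) :=
  stmt15_general G γ hγ U hop r hw h3
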